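/- arXiv:2108.00479 — 4 statements merged into one kernel-verified Lean document; each statement's English description precedes it below -/
import Mathlib

section
/- Let ℓ ≥ 1 and k ≥ 1 be integers and let D be a family of ℓ-element sets containing no sunflower of size k+1. Then |D| ≤ ℓ! · k^ℓ. -/
open Finset

/-- A family of finite sets is intersecting if any two members meet. -/
def Intersecting (F : Finset (Finset ℕ)) : Prop :=
  ∀ A ∈ F, ∀ B ∈ F, (A ∩ B).Nonempty

/-- `T` is a transversal of `F` inside `{1,…,n}` of size at most `k`. -/
def Transversal (n k : ℕ) (F : Finset (Finset ℕ)) (T : Finset ℕ) : Prop :=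
  T ⊆ Finset.Icc 1 n ∧ T.card ≤ k ∧ ∀ A ∈ F, (T ∩ A).Nonempty

/-- `B` is an inclusion-minimal transversal of `F`. -/
def MinTrans (n k : ℕ) (F : Finset (Finset ℕ)) (B : Finset ℕ) : Prop :=
  Transversal n k F B ∧ ∀ T, Transversal n k F T → T ⊆ B → T = B

/-- `F` is a saturated intersecting family of `k`-subsets of `{1,…,n}`. -/
def Saturated (n k : ℕ) (F : Finset (Finset ℕ)) : Prop :=
  Intersecting F ∧
    ∀ G ∈ (Finset.Icc 1 n).powersetCard k, G ∉ F → ¬ Intersecting (insert G F)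

/-- The family of distinct pairwise intersections of distinct members of `F`. -/
def interFam (F : Finset (Finset ℕ)) : Finset (Finset ℕ) :=
  ((F ×ˢ F).filter fun p => p.1 ≠ p.2).image fun p => p.1 ∩ p.2

/-!
Induction on `ℓ`. A maximal pairwise disjoint subfamily is a sunflower with empty center, so it
has at most `k` members; its union `Y` has at most `ℓ k` points and meets every member of `D`.
For each `y ∈ Y`, the sets of `D` through `y`, with `y` removed, form an `(ℓ - 1)`-uniform
family without a sunflower of size `k + 1`, so there are at most `(ℓ - 1)! k ^ (ℓ - 1)` of them.
Summing over `y ∈ Y` gives `|D| ≤ ℓ k (ℓ - 1)! k ^ (ℓ - 1) = ℓ! k ^ ℓ`.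
-/

namespace Finset

variable {α : Type*} [DecidableEq α]

def IsSunflower (S : Finset (Finset α)) (C : Finset α) : Prop :=
  ∀ B₁ ∈ S, ∀ B₂ ∈ S, B₁ ≠ B₂ → B₁ ∩ B₂ = C

def HasSunflower (D : Finset (Finset α)) (p : ℕ) : Prop :=
  ∃ (S : Finset (Finset α)) (C : Finset α), S ⊆ D ∧ S.card = p ∧ IsSunflower S C

theorem isSunflower_empty_of_pairwiseDisjoint {S : Finset (Finset α)}
    (hS : (S : Set (Finset α)).PairwiseDisjoint id) : IsSunflower S ∅ :=
  fun _ h₁ _ h₂ hne => disjoint_iff_inter_eq_empty.mp (hS h₁ h₂ hne)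

theorem HasSunflower.mono {D D' : Finset (Finset α)} {p : ℕ} (h : HasSunflower D p)
    (hD : D ⊆ D') : HasSunflower D' p :=
  let ⟨S, C, hSD, hS⟩ := h
  ⟨S, C, hSD.trans hD, hS⟩

theorem hasSunflower_of_le_card {S : Finset (Finset α)} {C : Finset α} {p : ℕ}
    (hS : IsSunflower S C) (hp : p ≤ S.card) : HasSunflower S p :=
  let ⟨T, hTS, hT⟩ := exists_subset_card_eq hp
  ⟨T, C, hTS, hT, fun _ h₁ _ h₂ => hS _ (hTS h₁) _ (hTS h₂)⟩

theorem exists_maximal_pairwiseDisjoint_subset (D : Finset (Finset α)) :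
    ∃ S ⊆ D, (S : Set (Finset α)).PairwiseDisjoint id ∧
      ∀ A ∈ D, A.Nonempty → ∃ B ∈ S, ¬Disjoint A B := by
  classical
  let disjointSubfamilies :=
    D.powerset.filter fun S : Finset (Finset α) => (S : Set (Finset α)).PairwiseDisjoint id
  obtain ⟨S, hS, hmax⟩ :=
    disjointSubfamilies.exists_max_image card ⟨∅, by simp [disjointSubfamilies]⟩
  simp only [disjointSubfamilies, mem_filter, mem_powerset] at hS hmax
  refine ⟨S, hS.1, hS.2, fun A hA hA₀ => ?_⟩
  by_cases hAS : A ∈ S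
  · exact ⟨A, hAS, by rw [disjoint_self_iff_empty]; exact hA₀.ne_empty⟩
  by_contra! hdisj
  have hins := hmax (insert A S) ⟨insert_subset hA hS.1, by
    rw [coe_insert]
    exact hS.2.insert fun B hB _ => hdisj B hB⟩
  rw [card_insert_of_notMem hAS] at hins
  omega

theorem exists_small_transversal_of_not_hasSunflower {D : Finset (Finset α)} {ℓ k : ℕ}
    (hD : ∀ A ∈ D, A.card = ℓ + 1) (hsun : ¬HasSunflower D (k + 1)) :
    ∃ Y : Finset α, Y.card ≤ (ℓ + 1) * k ∧ ∀ A ∈ D, (A ∩ Y).Nonempty := by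
  obtain ⟨S, hSD, hdisj, hmeet⟩ := exists_maximal_pairwiseDisjoint_subset D
  have hScard : S.card ≤ k := by
    by_contra! h
    exact hsun ((hasSunflower_of_le_card (isSunflower_empty_of_pairwiseDisjoint hdisj) h).mono hSD)
  refine ⟨S.biUnion id, ?_, fun A hA => ?_⟩
  · calc (S.biUnion id).card ≤ ∑ B ∈ S, B.card := card_biUnion_le
      _ = S.card * (ℓ + 1) := by rw [sum_const_nat fun B hB => hD B (hSD hB)]
      _ ≤ (ℓ + 1) * k := by rw [mul_comm]; gcongr
  · obtain ⟨B, hB, hAB⟩ := hmeet A hA (by rw [← card_pos, hD A hA]; omega)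
    obtain ⟨x, hxA, hxB⟩ := not_disjoint_iff.mp hAB
    exact ⟨x, mem_inter.mpr ⟨hxA, mem_biUnion.mpr ⟨B, hB, hxB⟩⟩⟩

def link (D : Finset (Finset α)) (y : α) : Finset (Finset α) :=
  (D.filter (y ∈ ·)).image (·.erase y)

theorem card_link (D : Finset (Finset α)) (y : α) :
    (link D y).card = (D.filter (y ∈ ·)).card := by
  refine card_image_of_injOn fun A hA B hB hAB => ?_
  simp only [coe_filter, Set.mem_ofPred_eq] at hA hB
  rw [← insert_erase hA.2, ← insert_erase hB.2]
  exact congrArg (insert y) hAB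

theorem notMem_of_mem_link {D : Finset (Finset α)} {y : α} {B : Finset α}
    (hB : B ∈ link D y) : y ∉ B := by
  obtain ⟨A, -, rfl⟩ := mem_image.mp hB
  exact notMem_erase y A

theorem insert_mem_of_mem_link {D : Finset (Finset α)} {y : α} {B : Finset α}
    (hB : B ∈ link D y) : insert y B ∈ D := by
  obtain ⟨A, hA, rfl⟩ := mem_image.mp hB
  rw [mem_filter] at hA
  rw [insert_erase hA.2]
  exact hA.1

theorem card_of_mem_link {D : Finset (Finset α)} {y : α} {ℓ : ℕ}
    (hD : ∀ A ∈ D, A.card = ℓ + 1) {B : Finset α} (hB : B ∈ link D y) : B.card = ℓ := by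
  have := hD _ (insert_mem_of_mem_link hB)
  rw [card_insert_of_notMem (notMem_of_mem_link hB)] at this
  omega

theorem HasSunflower.of_link {D : Finset (Finset α)} {y : α} {p : ℕ}
    (h : HasSunflower (link D y) p) : HasSunflower D p := by
  obtain ⟨S, C, hSD, hcard, hS⟩ := h
  have hinj : Set.InjOn (insert y) (S : Set (Finset α)) := fun B₁ h₁ B₂ h₂ h => by
    rw [← erase_insert (notMem_of_mem_link (hSD h₁)),
      ← erase_insert (notMem_of_mem_link (hSD h₂))]
    exact congrArg (·.erase y) h
  refine ⟨S.image (insert y), insert y C, ?_, by rwa [card_image_of_injOn hinj], ?_⟩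
  · simp only [image_subset_iff]
    exact fun B hB => insert_mem_of_mem_link (hSD hB)
  · simp only [IsSunflower, mem_image]
    rintro _ ⟨B₁, h₁, rfl⟩ _ ⟨B₂, h₂, rfl⟩ hne
    rw [← insert_inter_distrib, hS B₁ h₁ B₂ h₂ fun h => hne (h ▸ rfl)]

theorem card_le_factorial_mul_pow_of_not_hasSunflower {ℓ k : ℕ} {D : Finset (Finset α)}
    (hD : ∀ A ∈ D, A.card = ℓ) (hsun : ¬HasSunflower D (k + 1)) :
    D.card ≤ ℓ.factorial * k ^ ℓ := by
  induction ℓ generalizing D with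
  | zero =>
    simpa using card_le_one.mpr fun A hA B hB => by
      rw [card_eq_zero.mp (hD A hA), card_eq_zero.mp (hD B hB)]
  | succ ℓ ih =>
    obtain ⟨Y, hYcard, hY⟩ := exists_small_transversal_of_not_hasSunflower hD hsun
    have hcover : D ⊆ Y.biUnion fun y => D.filter (y ∈ ·) := fun A hA =>
      let ⟨y, hy⟩ := hY A hA
      let ⟨hyA, hyY⟩ := mem_inter.mp hy
      mem_biUnion.mpr ⟨y, hyY, mem_filter.mpr ⟨hA, hyA⟩⟩
    have hslice : ∀ y ∈ Y, (D.filter (y ∈ ·)).card ≤ ℓ.factorial * k ^ ℓ := fun y _ => by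
      rw [← card_link]
      exact ih (fun B => card_of_mem_link hD) fun h => hsun h.of_link
    calc D.card ≤ ∑ y ∈ Y, (D.filter (y ∈ ·)).card :=
          (card_le_card hcover).trans card_biUnion_le
      _ ≤ Y.card * (ℓ.factorial * k ^ ℓ) := by simpa using sum_le_sum hslice
      _ ≤ (ℓ + 1) * k * (ℓ.factorial * k ^ ℓ) := by gcongr
      _ = (ℓ + 1).factorial * k ^ (ℓ + 1) := by rw [Nat.factorial_succ, pow_succ]; ring

end Finset

theorem stmt_4_general (ℓ k : ℕ) (D : Finset (Finset ℕ))
    (hD : ∀ A ∈ D, A.card = ℓ)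
    (hsun : ¬ ∃ (S : Finset (Finset ℕ)) (C : Finset ℕ), S ⊆ D ∧ S.card = k + 1 ∧
        ∀ B₁ ∈ S, ∀ B₂ ∈ S, B₁ ≠ B₂ → B₁ ∩ B₂ = C) :
    D.card ≤ Nat.factorial ℓ * k ^ ℓ :=
  card_le_factorial_mul_pow_of_not_hasSunflower hD hsun

theorem stmt_4 (ℓ k : ℕ) (hℓ : 1 ≤ ℓ) (hk : 1 ≤ k) (D : Finset (Finset ℕ))
    (hD : ∀ A ∈ D, A.card = ℓ)
    (hsun : ¬ ∃ (S : Finset (Finset ℕ)) (C : Finset ℕ), S ⊆ D ∧ S.card = k + 1 ∧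
        ∀ B₁ ∈ S, ∀ B₂ ∈ S, B₁ ≠ B₂ → B₁ ∩ B₂ = C) :
    D.card ≤ Nat.factorial ℓ * k ^ ℓ :=
  stmt_4_general ℓ k D hD hsun
end

section
/- Let n > 2k ≥ 4, let X = {1,...,n}, and let A be the family of k-subsets A of X with |A ∩ {1,2,3}| ≥ 2. Then the number of distinct intersections A ∩ A' over pairs of distinct members A, A' of A equals 3·Σ_{i=0}^{k-2} C(n-3, i) + 3·Σ_{i=0}^{k-3} C(n-3, i) + Σ_{i=0}^{k-4} C(n-3, i). -/
open Finset

/-! Two distinct `k`-sets with at least two points in the 3-set `C = {1,2,3}` meet inside `C`, and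
their intersection is a proper subset of each, so every intersection is a set of size `< k` meeting
`C`. Conversely such a set `S` is the intersection `(S ∪ P) ∩ (S ∪ Q)` of two members, for disjoint
`P, Q` of size `k - |S|` outside `S` that supply the missing points of `C` (this needs `2k ≤ n`).
Hence `I(A)` consists of all sets of size `< k` meeting `C`; counting them as all sets of size `< k`
minus those avoiding `C`, and applying Pascal's rule three times, gives the formula. -/

theorem Nat.sum_range_choose_add_one (m k : ℕ) :
    ∑ i ∈ range k, (m + 1).choose i =
      ∑ i ∈ range k, m.choose i + ∑ i ∈ range (k - 1), m.choose i := by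
  cases k with
  | zero => simp
  | succ j =>
    simp only [sum_range_succ' _ j, Nat.choose_succ_succ, sum_add_distrib, Nat.add_sub_cancel,
      Nat.choose_zero_right]
    ring

theorem Nat.sum_range_choose_add_three (m k : ℕ) :
    ∑ i ∈ range k, (m + 3).choose i =
      ∑ i ∈ range k, m.choose i + 3 * ∑ i ∈ range (k - 1), m.choose i +
        3 * ∑ i ∈ range (k - 2), m.choose i + ∑ i ∈ range (k - 3), m.choose i := by
  simp only [Nat.sum_range_choose_add_one, Nat.sub_sub]
  ring

theorem Finset.card_filter_powerset_card_lt {α : Type*} (X : Finset α) (k : ℕ) :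
    #{S ∈ X.powerset | #S < k} = ∑ i ∈ range k, (#X).choose i := by
  rw [card_eq_sum_card_fiberwise (f := card) (t := range k)
    fun S hS => by simpa using (mem_filter.mp hS).2]
  refine sum_congr rfl fun i hi => ?_
  rw [← card_powersetCard, powersetCard_eq_filter, filter_filter]
  congr 1
  refine filter_congr fun S _ => ?_
  simp only [mem_range] at hi
  exact ⟨fun h => h.2, fun h => ⟨h ▸ hi, h⟩⟩

theorem Finset.card_filter_powerset_card_lt_inter_nonempty_add {α : Type*} [DecidableEq α]
    (X C : Finset α) (k : ℕ) :
    #{S ∈ X.powerset | #S < k ∧ (S ∩ C).Nonempty} + #{S ∈ (X \ C).powerset | #S < k} =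
      #{S ∈ X.powerset | #S < k} := by
  have hmiss : {S ∈ (X \ C).powerset | #S < k} =
      {S ∈ X.powerset | #S < k ∧ ¬(S ∩ C).Nonempty} := by
    ext S
    simp only [mem_filter, mem_powerset, subset_sdiff, not_nonempty_iff_eq_empty,
      ← disjoint_iff_inter_eq_empty]
    tauto
  rw [hmiss, ← filter_filter, ← filter_filter, card_filter_add_card_filter_not]

theorem Finset.exists_disjoint_card_eq_of_mem {α : Type*} [DecidableEq α] {W : Finset α}
    {y z : α} (hy : y ∈ W) (hz : z ∈ W) (hyz : y ≠ z) {m : ℕ} (hm : 1 ≤ m) (hW : 2 * m ≤ #W) :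
    ∃ P Q, P ⊆ W ∧ Q ⊆ W ∧ Disjoint P Q ∧ #P = m ∧ #Q = m ∧ y ∈ P ∧ z ∈ Q := by
  obtain ⟨P, hyP, hPW, hP⟩ := exists_subsuperset_card_eq (s := {y}) (t := W.erase z) (n := m)
    (by simpa using ⟨hyz, hy⟩) (by simpa using hm) (by rw [card_erase_of_mem hz]; omega)
  have hPW' : P ⊆ W := hPW.trans (erase_subset z W)
  obtain ⟨Q, hzQ, hQW, hQ⟩ := exists_subsuperset_card_eq (s := {z}) (t := W \ P) (n := m)
    (by simpa using ⟨hz, fun h => by simpa using hPW h⟩) (by simpa using hm)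
    (by rw [card_sdiff_of_subset hPW']; omega)
  exact ⟨P, Q, hPW', hQW.trans sdiff_subset, disjoint_of_subset_right hQW disjoint_sdiff, hP, hQ,
    singleton_subset_iff.mp hyP, singleton_subset_iff.mp hzQ⟩

theorem Finset.card_inter_lt_of_ne {α : Type*} [DecidableEq α] {A B : Finset α} {k : ℕ}
    (hA : #A = k) (hB : #B = k) (hAB : A ≠ B) : #(A ∩ B) < k := by
  refine hA ▸ card_lt_card (inter_subset_left.ssubset_of_ne fun h => hAB ?_)
  exact eq_of_subset_of_card_le (inter_eq_left.mp h) (by omega)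

theorem Finset.union_inter_union_of_disjoint {α : Type*} [DecidableEq α] {S P Q : Finset α}
    (hPQ : Disjoint P Q) : (S ∪ P) ∩ (S ∪ Q) = S := by
  rw [← union_inter_distrib_left, disjoint_iff_inter_eq_empty.mp hPQ, union_empty]

theorem mem_interFam {F : Finset (Finset ℕ)} {S : Finset ℕ} :
    S ∈ interFam F ↔ ∃ A ∈ F, ∃ B ∈ F, A ≠ B ∧ A ∩ B = S := by
  simp [interFam, and_assoc]

theorem interFam_filter_two_le_card_inter {X C : Finset ℕ} {k : ℕ} (hCX : C ⊆ X) (hC : #C = 3)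
    (hX : 2 * k ≤ #X) :
    interFam {A ∈ X.powersetCard k | 2 ≤ #(A ∩ C)} =
      {S ∈ X.powerset | #S < k ∧ (S ∩ C).Nonempty} := by
  ext S
  simp only [mem_interFam, mem_filter, mem_powersetCard, mem_powerset]
  constructor
  · rintro ⟨A, ⟨⟨hAX, hA⟩, hAC⟩, B, ⟨⟨hBX, hB⟩, hBC⟩, hAB, rfl⟩
    refine ⟨inter_subset_left.trans hAX, card_inter_lt_of_ne hA hB hAB, ?_⟩
    have := inter_nonempty_of_card_lt_card_add_card (inter_subset_right : A ∩ C ⊆ C)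
      (inter_subset_right : B ∩ C ⊆ C) (by omega)
    rwa [inter_inter_inter_comm, inter_self] at this
  · rintro ⟨hSX, hS, hSC⟩
    -- `y` and `z` will be added to the two members; they must lie in `C` unless `S` already
    -- has two points of `C`
    obtain ⟨y, hy, z, hz, hyz, hyC, hzC⟩ : ∃ y ∈ X \ S, ∃ z ∈ X \ S, y ≠ z ∧
        (2 ≤ #(S ∩ C) ∨ y ∈ C) ∧ (2 ≤ #(S ∩ C) ∨ z ∈ C) := by
      by_cases h2 : 2 ≤ #(S ∩ C)
      · obtain ⟨y, hy, z, hz, hyz⟩ := one_lt_card.mp (by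
          rw [card_sdiff_of_subset hSX]; omega : 1 < #(X \ S))
        exact ⟨y, hy, z, hz, hyz, .inl h2, .inl h2⟩
      · obtain ⟨y, z, hyz, hCS⟩ : ∃ y z, y ≠ z ∧ C \ S = {y, z} := card_eq_two.mp (by
          have := hSC.card_pos
          have := card_sdiff_add_card_inter C S
          rw [inter_comm] at this
          omega)
        have hy : y ∈ C \ S := by simp [hCS]
        have hz : z ∈ C \ S := by simp [hCS]
        exact ⟨y, sdiff_subset_sdiff hCX subset_rfl hy, z, sdiff_subset_sdiff hCX subset_rfl hz,
          hyz, .inr (mem_sdiff.mp hy).1, .inr (mem_sdiff.mp hz).1⟩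
    obtain ⟨P, Q, hPX, hQX, hPQ, hP, hQ, hyP, hzQ⟩ :=
      exists_disjoint_card_eq_of_mem hy hz hyz (m := k - #S) (by omega)
        (by rw [card_sdiff_of_subset hSX]; omega)
    have hSP : Disjoint S P := disjoint_of_subset_right hPX disjoint_sdiff
    have hSQ : Disjoint S Q := disjoint_of_subset_right hQX disjoint_sdiff
    have two_le_card {R : Finset ℕ} {x : ℕ} (hxR : x ∈ R) (hSR : Disjoint S R)
        (hx : 2 ≤ #(S ∩ C) ∨ x ∈ C) : 2 ≤ #((S ∪ R) ∩ C) := by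
      have hSC_le : S ∩ C ⊆ (S ∪ R) ∩ C := inter_subset_inter_right subset_union_left
      rcases hx with h2 | hxC
      · exact h2.trans (card_le_card hSC_le)
      · have hxS : x ∉ S ∩ C := fun h => disjoint_left.mp hSR (mem_inter.mp h).1 hxR
        calc 2 ≤ #(insert x (S ∩ C)) := by
              rw [card_insert_of_notMem hxS]; have := hSC.card_pos; omega
          _ ≤ #((S ∪ R) ∩ C) :=
              card_le_card (insert_subset (mem_inter.mpr ⟨mem_union_right _ hxR, hxC⟩) hSC_le)
    refine ⟨S ∪ P, ⟨⟨union_subset hSX (hPX.trans sdiff_subset), ?_⟩, two_le_card hyP hSP hyC⟩,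
      S ∪ Q, ⟨⟨union_subset hSX (hQX.trans sdiff_subset), ?_⟩, two_le_card hzQ hSQ hzC⟩,
      fun h => ?_, union_inter_union_of_disjoint hPQ⟩
    · rw [card_union_of_disjoint hSP]; omega
    · rw [card_union_of_disjoint hSQ]; omega
    · have : y ∈ S ∪ Q := h ▸ mem_union_right S hyP
      exact (mem_union.mp this).elim (mem_sdiff.mp hy).2 (disjoint_left.mp hPQ hyP)

theorem stmt_6 (n k : ℕ) (hk : 2 ≤ k) (hn : 2 * k < n) :
    (interFam (((Finset.Icc 1 n).powersetCard k).filter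
        (fun A => 2 ≤ (A ∩ ({1, 2, 3} : Finset ℕ)).card))).card =
      3 * ∑ i ∈ Finset.range (k - 1), (n - 3).choose i +
      3 * ∑ i ∈ Finset.range (k - 2), (n - 3).choose i +
      ∑ i ∈ Finset.range (k - 3), (n - 3).choose i := by
  have hCX : ({1, 2, 3} : Finset ℕ) ⊆ Icc 1 n := by
    intro x hx
    simp only [mem_insert, mem_singleton] at hx
    simp only [mem_Icc]
    omega
  have hX : #(Icc 1 n) = n - 3 + 3 := by simp only [Nat.card_Icc]; omega
  have hXC : #(Icc 1 n \ {1, 2, 3}) = n - 3 := by rw [card_sdiff_of_subset hCX, hX]; rfl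
  rw [interFam_filter_two_le_card_inter hCX rfl (by omega)]
  have hsplit := card_filter_powerset_card_lt_inter_nonempty_add (Icc 1 n) {1, 2, 3} k
  rw [card_filter_powerset_card_lt, card_filter_powerset_card_lt, hX, hXC,
    Nat.sum_range_choose_add_three] at hsplit
  omega
end

section
/- Let k ≥ 2, 2 ≤ ℓ ≤ k, and n > 2k. Let F be a saturated intersecting family of k-subsets of {1,...,n}, let B be its family of minimal transversals, and let t = min{|B| : B ∈ B} ≥ 2. Assume that the covering number of B^{(≤ℓ)} (the members of B of size at most ℓ) is at least 2, i.e., no single element meets all members of B of size at most ℓ. Then the number of members of B of size exactly ℓ is at most t · ℓ · k^{ℓ−2}. -/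
open Finset

/-!
Since `n > 2k`, a transversal `T` can be padded, avoiding any other set of size at most `k`, to a
`k`-set meeting all of `F`, which lies in `F` by saturation; hence any two transversals meet.
So a minimal transversal `D` of size `t` meets every member of `B^{(ℓ)}`, and for `x ∈ D` some
`E ∈ B^{(≤ℓ)}` avoiding `x` meets every member containing `x`: each member of `B^{(ℓ)}` contains
one of at most `t · ℓ` pairs `{x, y}`. A set `P` lying in a member of `B^{(ℓ)}` but smaller than
it is no transversal, so it misses some `A ∈ F`; branching over the `k` elements of `A` shows that
at most `k ^ (ℓ - |P|)` members of `B^{(ℓ)}` contain `P`.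
-/

open Classical in
/-- The paper's `B^{(ℓ)}`, as a finset. -/
noncomputable def minTransOfCard (n k ℓ : ℕ) (F : Finset (Finset ℕ)) : Finset (Finset ℕ) :=
  {B ∈ (Icc 1 n).powerset | MinTrans n k F B ∧ B.card = ℓ}

lemma mem_minTransOfCard {n k ℓ : ℕ} {F : Finset (Finset ℕ)} {B : Finset ℕ} :
    B ∈ minTransOfCard n k ℓ F ↔ MinTrans n k F B ∧ #B = ℓ := by
  simp only [minTransOfCard, mem_filter, mem_powerset]
  exact ⟨And.right, fun h => ⟨h.1.1.1, h⟩⟩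

lemma coe_minTransOfCard (n k ℓ : ℕ) (F : Finset (Finset ℕ)) :
    (minTransOfCard n k ℓ F : Set (Finset ℕ)) = {B | MinTrans n k F B ∧ B.card = ℓ} :=
  Set.ext fun _ => mem_minTransOfCard

lemma card_le_sum_card_filter_mem {α : Type*} [DecidableEq α] (S : Finset (Finset α))
    (T : Finset α) (hS : ∀ B ∈ S, (B ∩ T).Nonempty) : #S ≤ ∑ y ∈ T, #{B ∈ S | y ∈ B} := by
  refine (card_le_card fun B hB => ?_).trans card_biUnion_le
  obtain ⟨y, hy⟩ := hS B hB
  obtain ⟨hyB, hyT⟩ := mem_inter.mp hy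
  exact mem_biUnion.mpr ⟨y, hyT, mem_filter.mpr ⟨hB, hyB⟩⟩

section Saturated

variable {n k : ℕ} {F : Finset (Finset ℕ)}

lemma Saturated.exists_mem_superset_disjoint (hsat : Saturated n k F) (hk : 1 ≤ k)
    (hn : 2 * k < n) {T D : Finset ℕ} (hT : Transversal n k F T) (hD : #D ≤ k)
    (hTD : Disjoint T D) : ∃ A ∈ F, T ⊆ A ∧ Disjoint A D := by
  obtain ⟨hTsub, hTcard, hTmeet⟩ := hT
  have hTU : T ⊆ Icc 1 n \ D := subset_sdiff.mpr ⟨hTsub, hTD⟩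
  have hUcard : k ≤ #(Icc 1 n \ D) := by
    have := le_card_sdiff D (Icc 1 n)
    simp only [Nat.card_Icc, add_tsub_cancel_right] at this
    omega
  obtain ⟨A, hTA, hAU, hAcard⟩ := exists_subsuperset_card_eq hTU hTcard hUcard
  refine ⟨A, ?_, hTA, disjoint_of_subset_left hAU sdiff_disjoint⟩
  by_contra hAF
  have hAmeet : ∀ X ∈ F, (A ∩ X).Nonempty := fun X hX =>
    (hTmeet X hX).mono (inter_subset_inter_right hTA)
  refine hsat.2 A (mem_powersetCard.mpr ⟨hAU.trans sdiff_subset, hAcard⟩) hAF ?_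
  intro X hX Y hY
  rcases mem_insert.mp hX with rfl | hXF <;> rcases mem_insert.mp hY with rfl | hYF
  · rw [inter_self, ← card_pos]
    omega
  · exact hAmeet Y hYF
  · exact inter_comm Y X ▸ hAmeet X hXF
  · exact hsat.1 X hXF Y hYF

lemma Saturated.transversal_inter_nonempty (hsat : Saturated n k F) (hk : 1 ≤ k)
    (hn : 2 * k < n) {T₁ T₂ : Finset ℕ} (h₁ : Transversal n k F T₁)
    (h₂ : Transversal n k F T₂) : (T₁ ∩ T₂).Nonempty := by
  rw [← not_disjoint_iff_nonempty_inter]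
  intro h
  obtain ⟨A, hAF, -, hA₂⟩ := hsat.exists_mem_superset_disjoint hk hn h₁ h₂.2.1 h
  exact not_disjoint_iff_nonempty_inter.mpr (h₂.2.2 A hAF) hA₂.symm

lemma card_minTransOfCard_superset_le_of_card_add_eq {ℓ : ℕ}
    (hF : F ⊆ (Icc 1 n).powersetCard k) (d : ℕ) :
    ∀ P : Finset ℕ, #P + d = ℓ → #{B ∈ minTransOfCard n k ℓ F | P ⊆ B} ≤ k ^ d := by
  induction d with
  | zero =>
    intro P hP
    refine card_le_one.mpr fun B hB C hC => ?_
    simp only [mem_filter, mem_minTransOfCard] at hB hC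
    exact (eq_of_subset_of_card_le hB.2 (by omega)).symm.trans
      (eq_of_subset_of_card_le hC.2 (by omega))
  | succ d ih =>
    intro P hP
    obtain hS | ⟨B₀, hB₀S⟩ := {B ∈ minTransOfCard n k ℓ F | P ⊆ B}.eq_empty_or_nonempty
    · simp [hS]
    obtain ⟨hB₀, hPB₀⟩ := mem_filter.mp hB₀S
    obtain ⟨hB₀min, hB₀card⟩ := mem_minTransOfCard.mp hB₀
    have hPnot : ¬ Transversal n k F P := fun hP' => by
      have := congrArg card (hB₀min.2 P hP' hPB₀)
      omega
    obtain ⟨A, hAF, hPA⟩ : ∃ A ∈ F, ¬ (P ∩ A).Nonempty := by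
      by_contra! h
      exact hPnot ⟨hPB₀.trans hB₀min.1.1, (card_le_card hPB₀).trans hB₀min.1.2.1, h⟩
    calc #{B ∈ minTransOfCard n k ℓ F | P ⊆ B}
        ≤ ∑ x ∈ A, #{B ∈ {B ∈ minTransOfCard n k ℓ F | P ⊆ B} | x ∈ B} :=
          card_le_sum_card_filter_mem _ A fun B hB => by
            simp only [mem_filter] at hB
            exact (mem_minTransOfCard.mp hB.1).1.1.2.2 A hAF
      _ = ∑ x ∈ A, #{B ∈ minTransOfCard n k ℓ F | insert x P ⊆ B} := by
          simp only [filter_filter, insert_subset_iff, and_comm]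
      _ ≤ ∑ x ∈ A, k ^ d := sum_le_sum fun x hxA => ih _ <| by
          rw [card_insert_of_notMem fun hxP => hPA ⟨x, mem_inter.mpr ⟨hxP, hxA⟩⟩]
          omega
      _ = k ^ (d + 1) := by
          rw [sum_const, (mem_powersetCard.mp (hF hAF)).2, smul_eq_mul, pow_succ, mul_comm]

lemma card_minTransOfCard_superset_le {ℓ : ℕ} (hF : F ⊆ (Icc 1 n).powersetCard k)
    (P : Finset ℕ) : #{B ∈ minTransOfCard n k ℓ F | P ⊆ B} ≤ k ^ (ℓ - #P) := by
  by_cases hP : #P ≤ ℓ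
  · exact card_minTransOfCard_superset_le_of_card_add_eq hF _ P (by omega)
  · have : {B ∈ minTransOfCard n k ℓ F | P ⊆ B} = ∅ := filter_false_of_mem fun B hB hPB =>
      hP ((card_le_card hPB).trans (mem_minTransOfCard.mp hB).2.le)
    simp [this]

lemma Saturated.card_minTransOfCard_filter_mem_le (hsat : Saturated n k F) (hk : 1 ≤ k)
    (hn : 2 * k < n) (hF : F ⊆ (Icc 1 n).powersetCard k) {ℓ x : ℕ} {E : Finset ℕ}
    (hE : Transversal n k F E) (hxE : x ∉ E) :
    #{B ∈ minTransOfCard n k ℓ F | x ∈ B} ≤ #E * k ^ (ℓ - 2) := by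
  calc #{B ∈ minTransOfCard n k ℓ F | x ∈ B}
      ≤ ∑ y ∈ E, #{B ∈ {B ∈ minTransOfCard n k ℓ F | x ∈ B} | y ∈ B} :=
        card_le_sum_card_filter_mem _ E fun B hB => hsat.transversal_inter_nonempty hk hn
          (mem_minTransOfCard.mp (mem_filter.mp hB).1).1.1 hE
    _ = ∑ y ∈ E, #{B ∈ minTransOfCard n k ℓ F | {x, y} ⊆ B} := by
        simp only [filter_filter, insert_subset_iff, singleton_subset_iff]
    _ ≤ ∑ y ∈ E, k ^ (ℓ - 2) := sum_le_sum fun y hy => by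
        simpa [card_pair (ne_of_mem_of_not_mem hy hxE).symm] using
          card_minTransOfCard_superset_le (ℓ := ℓ) hF {x, y}
    _ = #E * k ^ (ℓ - 2) := by rw [sum_const, smul_eq_mul]

end Saturated

theorem stmt_11_general (n k ℓ t : ℕ) (hk : 2 ≤ k)
    (hn : 2 * k < n) (F : Finset (Finset ℕ))
    (hF : F ⊆ (Finset.Icc 1 n).powersetCard k) (hsat : Saturated n k F)
    (htex : ∃ B : Finset ℕ, MinTrans n k F B ∧ B.card = t)
    (hcov : ∀ x : ℕ, ∃ B : Finset ℕ, MinTrans n k F B ∧ B.card ≤ ℓ ∧ x ∉ B) :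
    {B : Finset ℕ | MinTrans n k F B ∧ B.card = ℓ}.ncard ≤ t * ℓ * k ^ (ℓ - 2) := by
  obtain ⟨D, hD, rfl⟩ := htex
  rw [← coe_minTransOfCard, Set.ncard_coe_finset]
  calc #(minTransOfCard n k ℓ F)
      ≤ ∑ x ∈ D, #{B ∈ minTransOfCard n k ℓ F | x ∈ B} :=
        card_le_sum_card_filter_mem _ D fun B hB =>
          hsat.transversal_inter_nonempty (by omega) hn (mem_minTransOfCard.mp hB).1.1 hD.1
    _ ≤ ∑ x ∈ D, ℓ * k ^ (ℓ - 2) := sum_le_sum fun x _ => by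
        obtain ⟨E, hE, hEcard, hxE⟩ := hcov x
        exact (hsat.card_minTransOfCard_filter_mem_le (by omega) hn hF hE.1 hxE).trans
          (Nat.mul_le_mul_right _ hEcard)
    _ = #D * ℓ * k ^ (ℓ - 2) := by rw [sum_const, smul_eq_mul, mul_assoc]

theorem stmt_11 (n k ℓ t : ℕ) (hk : 2 ≤ k) (hℓ : 2 ≤ ℓ) (hℓk : ℓ ≤ k)
    (hn : 2 * k < n) (F : Finset (Finset ℕ))
    (hF : F ⊆ (Finset.Icc 1 n).powersetCard k) (hsat : Saturated n k F)
    (htmin : ∀ B : Finset ℕ, MinTrans n k F B → t ≤ B.card)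
    (htex : ∃ B : Finset ℕ, MinTrans n k F B ∧ B.card = t)
    (ht2 : 2 ≤ t)
    (hcov : ∀ x : ℕ, ∃ B : Finset ℕ, MinTrans n k F B ∧ B.card ≤ ℓ ∧ x ∉ B) :
    {B : Finset ℕ | MinTrans n k F B ∧ B.card = ℓ}.ncard ≤ t * ℓ * k ^ (ℓ - 2) :=
  stmt_11_general n k ℓ t hk hn F hF hsat htex hcov
end

section
/- Let F be a saturated intersecting family of k-subsets of {1,...,n} with n > 2k and covering number τ(F) = k. Then |F| ≤ k^k. -/
open Finset

/-!
Branching argument of Erdős and Lovász. Count the members of `F` containing a set `S` with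
`|S| < k`. Since `τ(F) = k`, `S` is not a transversal, so some `B ∈ F` misses `S`; every member
containing `S` meets `B`, hence contains `S ∪ {x}` for one of the at most `k` points `x ∈ B`.
Each branching enlarges `S` by one point, and once `|S| = k` at most one member contains `S`.
Starting from `S = ∅` this gives `|F| ≤ k ^ k`.
-/

theorem Intersecting.set_intersecting {F : Finset (Finset ℕ)} (hF : Intersecting F) :
    (F : Set (Finset ℕ)).Intersecting := fun A hA B hB =>
  not_disjoint_iff_nonempty_inter.mpr (hF A hA B hB)

section Branching

variable {α : Type*} [DecidableEq α] {F : Finset (Finset α)} {k : ℕ}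

theorem card_filter_superset_le_one (hcard : ∀ A ∈ F, A.card ≤ k) {S : Finset α}
    (hS : k ≤ S.card) : #{A ∈ F | S ⊆ A} ≤ 1 := by
  have eq_S : ∀ A ∈ F, S ⊆ A → A = S := fun A hA hSA =>
    (eq_of_subset_of_card_le hSA ((hcard A hA).trans hS)).symm
  refine card_le_one.mpr fun A hA A' hA' => ?_
  rw [mem_filter] at hA hA'
  rw [eq_S A hA.1 hA.2, eq_S A' hA'.1 hA'.2]

theorem card_filter_superset_le_sum (hF : (F : Set (Finset α)).Intersecting) {B S : Finset α}
    (hB : B ∈ F) : #{A ∈ F | S ⊆ A} ≤ ∑ x ∈ B, #{A ∈ F | insert x S ⊆ A} := by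
  refine (card_le_card fun A hA => ?_).trans card_biUnion_le
  rw [mem_filter] at hA
  obtain ⟨x, hxA, hxB⟩ := not_disjoint_iff.mp (hF hA.1 hB)
  exact mem_biUnion.mpr ⟨x, hxB, mem_filter.mpr ⟨hA.1, insert_subset hxA hA.2⟩⟩

theorem card_filter_superset_le_pow (hcard : ∀ A ∈ F, A.card ≤ k)
    (hF : (F : Set (Finset α)).Intersecting)
    (hτ : ∀ T : Finset α, (∀ A ∈ F, (T ∩ A).Nonempty) → k ≤ T.card) :
    ∀ (m : ℕ) (S : Finset α), S.card + m = k → #{A ∈ F | S ⊆ A} ≤ k ^ m := by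
  intro m
  induction m with
  | zero =>
    intro S hS
    simpa using card_filter_superset_le_one hcard hS.ge
  | succ m ih =>
    intro S hS
    obtain ⟨B, hB, hSB⟩ : ∃ B ∈ F, ¬(S ∩ B).Nonempty := by
      by_contra! hcover
      have := hτ S hcover
      omega
    have branch : ∀ x ∈ B, #{A ∈ F | insert x S ⊆ A} ≤ k ^ m := fun x hx => by
      have hxS : x ∉ S := fun hxS => hSB ⟨x, mem_inter.mpr ⟨hxS, hx⟩⟩
      exact ih _ (by rw [card_insert_of_notMem hxS]; omega)
    calc #{A ∈ F | S ⊆ A}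
        ≤ ∑ x ∈ B, #{A ∈ F | insert x S ⊆ A} := card_filter_superset_le_sum hF hB
      _ ≤ B.card * k ^ m := by simpa using sum_le_sum branch
      _ ≤ k * k ^ m := Nat.mul_le_mul_right _ (hcard B hB)
      _ = k ^ (m + 1) := (pow_succ' k m).symm

theorem card_le_pow_of_le_covering (hcard : ∀ A ∈ F, A.card ≤ k)
    (hF : (F : Set (Finset α)).Intersecting)
    (hτ : ∀ T : Finset α, (∀ A ∈ F, (T ∩ A).Nonempty) → k ≤ T.card) :
    F.card ≤ k ^ k := by
  simpa using card_filter_superset_le_pow hcard hF hτ k ∅ (by simp)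

end Branching

theorem stmt_12_general (n k : ℕ) (F : Finset (Finset ℕ))
    (hF : F ⊆ (Finset.Icc 1 n).powersetCard k) (hsat : Saturated n k F)
    (hτ : ∀ T : Finset ℕ, (∀ A ∈ F, (T ∩ A).Nonempty) → k ≤ T.card) :
    F.card ≤ k ^ k :=
  card_le_pow_of_le_covering (fun _ hA => (mem_powersetCard.mp (hF hA)).2.le)
    hsat.1.set_intersecting hτ

theorem stmt_12 (n k : ℕ) (hn : 2 * k < n) (F : Finset (Finset ℕ))
    (hF : F ⊆ (Finset.Icc 1 n).powersetCard k) (hsat : Saturated n k F)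
    (hτ : ∀ T : Finset ℕ, (∀ A ∈ F, (T ∩ A).Nonempty) → k ≤ T.card) :
    F.card ≤ k ^ k :=
  stmt_12_general n k F hF hsat hτ
end
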